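/- arXiv:1108.1042 — 3 statements merged into one kernel-verified Lean document; each statement's English description precedes it below -/
import Mathlib

section
/- Affine invariance of the P-algorithm criterion: let y : Fin n → ℝ, a > 0, b : ℝ, z i = a*y i + b. Let μ̄, σ̄ > 0 be estimates for y and set μ̃ = aμ̄ + b, σ̃ = aσ̄. For any vector Υ and matrix M with ∑Υ_i M_{ij} Υ_j < 1, define the improvement-probability argument T(y, μ, σ) = (min_i y_i − εσ − (μ + ∑_{i,j}(y_i − μ)M_{ij}Υ_j)) / (σ·√(1 − ∑Υ_i M_{ij} Υ_j)) for ε > 0. Then T(z, μ̃, σ̃) = T(y, μ̄, σ̄). -/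
/-! The criterion is a ratio whose numerator and denominator are both homogeneous of degree one
in the affine change of scale `x ↦ a * x + b`: the minimum commutes with this increasing map, the
shift `b` cancels against the shifted mean, and the common factor `a > 0` drops out of the ratio. -/

lemma Finset.inf'_mul_add {ι α : Type*} [Semiring α] [LinearOrder α] [IsOrderedRing α]
    {s : Finset ι} (H : s.Nonempty) (f : ι → α) {a : α} (ha : 0 ≤ a) (b : α) :
    s.inf' H (fun i => a * f i + b) = a * s.inf' H f + b :=
  (Finset.apply_inf'_eq_inf'_comp H (fun x => a * x + b) fun _ _ =>
    ((monotone_id.const_mul ha).add_const b).map_min).symm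

lemma Finset.sum_sum_mul_add_sub_mul_add {ι κ R : Type*} [Fintype ι] [Fintype κ] [CommRing R]
    (y : ι → R) (μ a b : R) (M : Matrix ι κ R) (v : κ → R) :
    ∑ i, ∑ j, (a * y i + b - (a * μ + b)) * M i j * v j =
      a * ∑ i, ∑ j, (y i - μ) * M i j * v j := by
  simp only [Finset.mul_sum]
  exact Finset.sum_congr rfl fun _ _ => Finset.sum_congr rfl fun _ _ => by ring

theorem P_criterion_affine_invariant_general (n : ℕ) (y : Fin n → ℝ)
    (a b ε : ℝ) (ha : 0 < a)
    (z : Fin n → ℝ) (hz : ∀ i, z i = a * y i + b)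
    (M : Matrix (Fin n) (Fin n) ℝ) (Υ : Fin n → ℝ)
    (μy σy : ℝ)
    (μz σz : ℝ) (hμz : μz = a * μy + b) (hσz : σz = a * σy)
    (hne : 0 < n)
    (T : (Fin n → ℝ) → ℝ → ℝ → ℝ)
    (hT : ∀ w μ σ, T w μ σ =
      ((Finset.univ.inf' (Finset.univ_nonempty_iff.mpr (Fin.pos_iff_nonempty.mp hne)) w)
        - ε * σ - (μ + ∑ i, ∑ j, (w i - μ) * M i j * Υ j))
      / (σ * Real.sqrt (1 - ∑ i, ∑ j, Υ i * M i j * Υ j))) :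
    T z μz σz = T y μy σy := by
  obtain rfl : z = fun i => a * y i + b := funext hz
  subst hμz hσz
  rw [hT, hT, Finset.inf'_mul_add _ _ ha.le, Finset.sum_sum_mul_add_sub_mul_add]
  conv_rhs => rw [← mul_div_mul_left _ _ ha.ne']
  congr 1 <;> ring

theorem P_criterion_affine_invariant (n : ℕ) (hn : 1 ≤ n) (y : Fin n → ℝ)
    (a b ε : ℝ) (ha : 0 < a) (hε : 0 < ε)
    (z : Fin n → ℝ) (hz : ∀ i, z i = a * y i + b)
    (M : Matrix (Fin n) (Fin n) ℝ) (Υ : Fin n → ℝ)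
    (hq : ∑ i, ∑ j, Υ i * M i j * Υ j < 1)
    (μy σy : ℝ) (hσy : 0 < σy)
    (μz σz : ℝ) (hμz : μz = a * μy + b) (hσz : σz = a * σy)
    (hne : 0 < n)
    (T : (Fin n → ℝ) → ℝ → ℝ → ℝ)
    (hT : ∀ w μ σ, T w μ σ =
      ((Finset.univ.inf' (Finset.univ_nonempty_iff.mpr (Fin.pos_iff_nonempty.mp hne)) w)
        - ε * σ - (μ + ∑ i, ∑ j, (w i - μ) * M i j * Υ j))
      / (σ * Real.sqrt (1 - ∑ i, ∑ j, Υ i * M i j * Υ j))) :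
    T z μz σz = T y μy σy :=
  P_criterion_affine_invariant_general n y a b ε ha z hz M Υ μy σy μz σz hμz hσz hne T hT
end

section
/- DIRECT necessary conditions: in the one-dimensional DIRECT algorithm with subintervals of half-lengths Δ_i and center values f(c_i), if subinterval j is potentially optimal (there exists L > 0 with f(c_j) − LΔ_j ≤ f(c_i) − LΔ_i for all i and f(c_j) − LΔ_j ≤ f_min − ε|f_min|), then L satisfies L ≥ max_{i: Δ_i < Δ_j} (f(c_j)−f(c_i))/(Δ_j−Δ_i), L ≤ min_{i: Δ_i > Δ_j} (f(c_i)−f(c_j))/(Δ_i−Δ_j), and L ≥ (f(c_j) − f_min + ε|f_min|)/Δ_j. -/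
theorem DIRECT_necessary_conditions (n : ℕ) (hn : 0 < n)
    (Δ F : Fin n → ℝ) (hΔ : ∀ i, 0 < Δ i)
    (fmin : ℝ)
    (hfmin : fmin = Finset.univ.inf' (Finset.univ_nonempty_iff.mpr (Fin.pos_iff_nonempty.mp hn)) F)
    (ε : ℝ) (hε0 : 0 < ε) (hε1 : ε < 1) (j : Fin n)
    (L : ℝ) (hL : 0 < L)
    (hpo1 : ∀ i, F j - L * Δ j ≤ F i - L * Δ i)
    (hpo2 : F j - L * Δ j ≤ fmin - ε * |fmin|) :
    (∀ i, Δ i < Δ j → (F j - F i) / (Δ j - Δ i) ≤ L) ∧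
    (∀ i, Δ j < Δ i → L ≤ (F i - F j) / (Δ i - Δ j)) ∧
    (F j - fmin + ε * |fmin|) / Δ j ≤ L := by
  refine ⟨fun i hi => ?_, fun i hi => ?_, ?_⟩
  · rw [div_le_iff₀ (by linarith)]
    have := hpo1 i; nlinarith
  · rw [le_div_iff₀ (by linarith)]
    have := hpo1 i; nlinarith
  · rw [div_le_iff₀ (hΔ j)]
    linarith
end

section
/- If δ > δ_f/ε where δ_f = (F⁺ − F_j)·Δ_j/(Δ⁺ − Δ_j) − F_j + (1−ε)·f_min, all F_i + δ > 0, and subinterval j is not the one with maximal Δ, then the lower bound L₋ = (F_j + δ − (f_min + δ) + ε·(f_min + δ))/Δ_j strictly exceeds the upper bound L₊ = (F⁺ − F_j)/(Δ⁺ − Δ_j), hence no L with L₋ ≤ L ≤ L₊ exists. -/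
theorem DIRECT_bounds_incompatible (Fj Fp fmin Δj Δp ε δ : ℝ)
    (hΔj : 0 < Δj) (hΔ : Δj < Δp) (hε0 : 0 < ε) (hε1 : ε < 1)
    (hfmin : fmin ≤ Fj) (hpos : 0 < fmin + δ)
    (δf : ℝ) (hδf : δf = (Fp - Fj) * Δj / (Δp - Δj) - Fj + (1 - ε) * fmin)
    (hδ : δ > δf / ε)
    (Lminus Lplus : ℝ)
    (hLminus : Lminus = (Fj + δ - (fmin + δ) + ε * (fmin + δ)) / Δj)
    (hLplus : Lplus = (Fp - Fj) / (Δp - Δj)) :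
    Lplus < Lminus ∧ ¬ ∃ L : ℝ, Lminus ≤ L ∧ L ≤ Lplus := by
  have hΔd : 0 < Δp - Δj := by linarith
  have h1 : δf < ε * δ := by
    have := (div_lt_iff₀ hε0).mp hδ
    linarith
  have h2 : (Fp - Fj) * Δj / (Δp - Δj) < Fj - (1 - ε) * fmin + ε * δ := by
    rw [hδf] at h1; linarith
  have key : Lplus < Lminus := by
    rw [hLminus, hLplus]
    rw [div_lt_div_iff₀ hΔd hΔj]
    have h3 : (Fp - Fj) * Δj < (Fj - (1 - ε) * fmin + ε * δ) * (Δp - Δj) := by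
      have := (div_lt_iff₀ hΔd).mp h2
      linarith [mul_pos hΔd (sub_pos.mpr h2)]
    nlinarith
  refine ⟨key, ?_⟩
  rintro ⟨L, h4, h5⟩
  linarith
end
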